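/- arXiv:1206.2686 — 6 statements merged into one kernel-verified Lean document; each statement's English description precedes it below -/
import Mathlib

section
/- Let v : [t_{n-1}, t_n] → ℝ be continuously differentiable, let v̄ = (1/k_n)·∫_{t_{n-1}}^{t_n} v(s) ds with k_n = t_n - t_{n-1}, and define the linear interpolant Π⁻v(t) = v(t_n) + ((v(t_n) - v̄)/(k_n/2))·(t - t_n). Then for all t ∈ [t_{n-1}, t_n], Π⁻v(t) - v(t) = ∫_t^{t_n} v'(s) ds - 2·((t_n - t)/k_n²)·∫_{t_{n-1}}^{t_n} (s - t_{n-1})·v'(s) ds. -/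
theorem stmt4 (a b : ℝ) (hab : a < b) (v v' : ℝ → ℝ)
    (hderiv : ∀ s ∈ Set.Icc a b, HasDerivAt v (v' s) s)
    (hcont : ContinuousOn v' (Set.Icc a b)) :
    ∀ t ∈ Set.Icc a b,
      (v b + ((v b - (b - a)⁻¹ * ∫ s in a..b, v s) / ((b - a) / 2)) * (t - b)) - v t
        = (∫ s in t..b, v' s)
            - 2 * ((b - t) / (b - a) ^ 2) * ∫ s in a..b, (s - a) * v' s := by
  intro t ht
  have hab' : Set.uIcc a b = Set.Icc a b := Set.uIcc_of_le hab.le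
  have hsub : Set.uIcc t b ⊆ Set.Icc a b := by
    rw [Set.uIcc_of_le ht.2]
    exact Set.Icc_subset_Icc ht.1 le_rfl
  have hint : IntervalIntegrable v' MeasureTheory.volume t b :=
    (hcont.mono (by rw [Set.uIcc_of_le ht.2] at hsub; exact hsub)).intervalIntegrable_of_Icc ht.2
  have hftc : (∫ s in t..b, v' s) = v b - v t :=
    intervalIntegral.integral_eq_sub_of_hasDerivAt (fun s hs => hderiv s (hsub hs)) hint
  have hparts : (∫ s in a..b, (s - a) * v' s)
      = (b - a) * v b - (a - a) * v a - ∫ s in a..b, 1 * v s := by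
    apply intervalIntegral.integral_mul_deriv_eq_deriv_mul
      (u := fun s => s - a) (u' := fun _ => 1)
    · intro x _; simpa using (hasDerivAt_id x).sub_const a
    · intro x hx; exact hderiv x (hab' ▸ hx)
    · exact intervalIntegrable_const
    · exact hcont.intervalIntegrable_of_Icc hab.le
  simp only [one_mul, sub_self, zero_mul, sub_zero] at hparts
  rw [hftc, hparts]
  have hba : b - a ≠ 0 := sub_ne_zero.mpr hab.ne'
  field_simp
  ring
end

section
/- Let v : [t_{n-1}, t_n] → ℝ be twice continuously differentiable, and let Π⁻v be the affine function with Π⁻v(t_n) = v(t_n) and ∫_{t_{n-1}}^{t_n}(v - Π⁻v) dt = 0. Then for all t ∈ [t_{n-1}, t_n], Π⁻v(t) - v(t) = ∫_t^{t_n} (t - s)·v''(s) ds + ((t_n - t)/k_n²)·∫_{t_{n-1}}^{t_n} (s - t_{n-1})²·v''(s) ds, where k_n = t_n - t_{n-1}. -/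
/-!
Integrating by parts removes `v''` from both integrals on the right: `∫ₜᵇ (t - s) v''(s) ds` is the
Taylor remainder `(t - b) v'(b) + v(b) - v(t)`, and `∫ₐᵇ (s - a)² v''(s) ds` equals
`(b - a)² v'(b) - 2 ((b - a) v(b) - ∫ₐᵇ v)`. The `v'(b)` terms cancel, leaving `Π⁻v(t) - v(t)`, as
`Π⁻v` is the affine function through `(b, v(b))` with slope `2 (v(b) - mean v) / (b - a)`.
-/

open Set intervalIntegral MeasureTheory

section

variable {a b : ℝ} {v v' v'' : ℝ → ℝ}

theorem intervalIntegrable_of_hasDerivAt (hv : ∀ s ∈ uIcc a b, HasDerivAt v (v' s) s) :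
    IntervalIntegrable v volume a b :=
  ContinuousOn.intervalIntegrable fun s hs ↦ (hv s hs).continuousAt.continuousWithinAt

theorem integral_sub_mul_second_deriv (hv : ∀ s ∈ uIcc a b, HasDerivAt v (v' s) s)
    (hv' : ∀ s ∈ uIcc a b, HasDerivAt v' (v'' s) s) (hv'' : IntervalIntegrable v'' volume a b) :
    ∫ s in a..b, (a - s) * v'' s = (a - b) * v' b + (v b - v a) := by
  have hpoly : ∀ s ∈ uIcc a b, HasDerivAt (fun s ↦ a - s) (-1) s := fun s _ ↦ by
    simpa using (hasDerivAt_id s).const_sub a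
  have hftc : ∫ s in a..b, v' s = v b - v a :=
    integral_eq_sub_of_hasDerivAt hv (intervalIntegrable_of_hasDerivAt hv')
  rw [integral_mul_deriv_eq_deriv_mul hpoly hv' intervalIntegrable_const hv'']
  simp only [neg_one_mul, intervalIntegral.integral_neg, hftc]
  ring

theorem integral_sub_mul_deriv (hv : ∀ s ∈ uIcc a b, HasDerivAt v (v' s) s)
    (hv' : IntervalIntegrable v' volume a b) :
    ∫ s in a..b, (s - a) * v' s = (b - a) * v b - ∫ s in a..b, v s := by
  have hpoly : ∀ s ∈ uIcc a b, HasDerivAt (fun s ↦ s - a) 1 s := fun s _ ↦ by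
    simpa using (hasDerivAt_id s).sub_const a
  rw [integral_mul_deriv_eq_deriv_mul hpoly hv intervalIntegrable_const hv']
  simp

theorem integral_sub_sq_mul_second_deriv (hv : ∀ s ∈ uIcc a b, HasDerivAt v (v' s) s)
    (hv' : ∀ s ∈ uIcc a b, HasDerivAt v' (v'' s) s) (hv'' : IntervalIntegrable v'' volume a b) :
    ∫ s in a..b, (s - a) ^ 2 * v'' s
      = (b - a) ^ 2 * v' b - 2 * ((b - a) * v b - ∫ s in a..b, v s) := by
  have hpoly : ∀ s ∈ uIcc a b, HasDerivAt (fun s ↦ (s - a) ^ 2) (2 * (s - a)) s := fun s _ ↦ by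
    simpa [Pi.pow_def] using ((hasDerivAt_id s).sub_const a).pow 2
  have hpoly' : IntervalIntegrable (fun s ↦ 2 * (s - a)) volume a b :=
    (continuous_const.mul (continuous_id.sub continuous_const)).intervalIntegrable a b
  rw [integral_mul_deriv_eq_deriv_mul hpoly hv' hpoly' hv'']
  simp only [mul_assoc, intervalIntegral.integral_const_mul,
    integral_sub_mul_deriv hv (intervalIntegrable_of_hasDerivAt hv')]
  ring

end

theorem stmt5 (a b : ℝ) (hab : a < b) (v v' v'' : ℝ → ℝ)
    (hderiv : ∀ s ∈ Set.Icc a b, HasDerivAt v (v' s) s)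
    (hderiv2 : ∀ s ∈ Set.Icc a b, HasDerivAt v' (v'' s) s)
    (hcont : ContinuousOn v'' (Set.Icc a b)) :
    ∀ t ∈ Set.Icc a b,
      (v b + ((v b - (b - a)⁻¹ * ∫ s in a..b, v s) / ((b - a) / 2)) * (t - b)) - v t
        = (∫ s in t..b, (t - s) * v'' s)
            + ((b - t) / (b - a) ^ 2) * ∫ s in a..b, (s - a) ^ 2 * v'' s := by
  rintro t ⟨hat, htb⟩
  have hab' : uIcc a b = Icc a b := uIcc_of_le hab.le
  have htb' : uIcc t b ⊆ Icc a b := by rw [uIcc_of_le htb]; exact Icc_subset_Icc_left hat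
  rw [integral_sub_mul_second_deriv (fun s hs ↦ hderiv s (htb' hs))
      (fun s hs ↦ hderiv2 s (htb' hs)) ((hcont.mono htb').intervalIntegrable),
    integral_sub_sq_mul_second_deriv (fun s hs ↦ hderiv s (hab' ▸ hs))
      (fun s hs ↦ hderiv2 s (hab' ▸ hs)) (hcont.intervalIntegrable_of_Icc hab.le)]
  have hba : b - a ≠ 0 := sub_ne_zero.mpr hab.ne'
  field_simp
  ring
end

section
/- Let v : [t_{n-1}, t_n] → ℝ be r-times continuously differentiable for r ∈ {1, 2}, and let Π⁻v be the affine function with Π⁻v(t_n) = v(t_n) and mean value over [t_{n-1}, t_n] equal to that of v. Then sup_{t ∈ [t_{n-1},t_n]} |Π⁻v(t) - v(t)| ≤ (4 - r)·k_n^{r-1}·∫_{t_{n-1}}^{t_n} |v^{(r)}(t)| dt ≤ (4 - r)·k_n^r·sup_{t ∈ [t_{n-1},t_n]} |v^{(r)}(t)|, where k_n = t_n - t_{n-1}. -/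
/-!
For `r = 1`, the fundamental theorem of calculus bounds both `v b - v t` and `v b - mean v`
by `∫ |v'|`; the slope of `Π⁻ v` is `2 (v b - mean v) / (b - a)`, which contributes at most `2 ∫ |v'|`.
For `r = 2`, `Π⁻` reproduces affine functions, so the error of `v` equals that of the Taylor
remainder `w s = v s - v b - v' b (s - b)`, and `|w s| ≤ (b - s) ∫ |v''|` by the mean value
inequality applied to `v' - v' b`.
-/

open intervalIntegral Set
open MeasureTheory (volume)

/-- `Π⁻ v` on `[a, b]`: the affine function with value `v b` at `b` and mean value over `[a, b]`
equal to that of `v` (so its value at the midpoint is that mean). -/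
noncomputable def rightMeanInterp (a b : ℝ) (v : ℝ → ℝ) (t : ℝ) : ℝ :=
  v b + ((v b - (b - a)⁻¹ * ∫ s in a..b, v s) / ((b - a) / 2)) * (t - b)

theorem rightMeanInterp_sub_linear_sub {a b : ℝ} (hab : a ≠ b) {v : ℝ → ℝ}
    (hv : IntervalIntegrable v volume a b) (d t : ℝ) :
    rightMeanInterp a b (fun s => v s - d * (s - b)) t - (v t - d * (t - b))
      = rightMeanInterp a b v t - v t := by
  have hk : b - a ≠ 0 := sub_ne_zero.mpr hab.symm
  have hlin : IntervalIntegrable (fun s => d * (s - b)) volume a b :=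
    (continuous_const.mul (continuous_id.sub continuous_const)).intervalIntegrable a b
  simp only [rightMeanInterp]
  rw [integral_sub hv hlin, integral_const_mul,
    integral_sub intervalIntegrable_id intervalIntegrable_const, integral_id, integral_const,
    smul_eq_mul]
  field_simp
  ring

theorem abs_rightMeanInterp_sub_le {a b : ℝ} (hab : a < b) {w φ : ℝ → ℝ}
    (hw : IntervalIntegrable w volume a b) (hφ : IntervalIntegrable φ volume a b)
    (hwφ : ∀ s ∈ Icc a b, |w b - w s| ≤ φ s) {t : ℝ} (ht : t ∈ Icc a b) :
    |rightMeanInterp a b w t - w t| ≤ φ t + 2 * (b - t) / (b - a) ^ 2 * ∫ s in a..b, φ s := by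
  have hk : 0 < b - a := sub_pos.mpr hab
  have hdiff : IntervalIntegrable (fun s => w b - w s) volume a b :=
    intervalIntegrable_const.sub hw
  have hmean : |∫ s in a..b, (w b - w s)| ≤ ∫ s in a..b, φ s :=
    (abs_integral_le_integral_abs hab.le).trans (integral_mono_on hab.le hdiff.abs hφ hwφ)
  have hsplit : rightMeanInterp a b w t - w t
      = (w b - w t) + 2 * (t - b) / (b - a) ^ 2 * ∫ s in a..b, (w b - w s) := by
    rw [integral_sub intervalIntegrable_const hw, integral_const, smul_eq_mul, rightMeanInterp]
    field_simp
    ring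
  have hcoef : |2 * (t - b) / (b - a) ^ 2| = 2 * (b - t) / (b - a) ^ 2 := by
    rw [abs_div, abs_mul, abs_of_nonpos (sub_nonpos.mpr ht.2), abs_of_pos (by positivity)]
    norm_num
  calc |rightMeanInterp a b w t - w t|
      ≤ |w b - w t| + 2 * (b - t) / (b - a) ^ 2 * |∫ s in a..b, (w b - w s)| := by
        rw [hsplit, ← hcoef, ← abs_mul]
        exact abs_add_le _ _
    _ ≤ φ t + 2 * (b - t) / (b - a) ^ 2 * ∫ s in a..b, φ s := by
        gcongr
        · exact hwφ t ht
        · exact div_nonneg (by linarith [ht.2]) (by positivity)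

theorem integral_derivWithin_eq_sub_of_mem_Icc {a b : ℝ} (hab : a < b) {f : ℝ → ℝ}
    (hf : ContDiffOn ℝ 1 f (Icc a b)) {t : ℝ} (ht : t ∈ Icc a b) :
    ∫ s in t..b, derivWithin f (Icc a b) s = f b - f t := by
  have hsub : Icc t b ⊆ Icc a b := Icc_subset_Icc ht.1 le_rfl
  refine integral_eq_sub_of_hasDerivAt_of_le ht.2 (hf.continuousOn.mono hsub) (fun x hx => ?_) ?_
  · have hx' : x ∈ Ioo a b := Ioo_subset_Ioo ht.1 le_rfl hx
    exact ((hf.differentiableOn one_ne_zero x (Ioo_subset_Icc_self hx')).hasDerivWithinAt)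
      |>.hasDerivAt (Icc_mem_nhds hx'.1 hx'.2)
  · exact ((hf.continuousOn_derivWithin (uniqueDiffOn_Icc hab) le_rfl).mono hsub)
      |>.intervalIntegrable_of_Icc ht.2

theorem abs_sub_le_integral_abs_derivWithin {a b : ℝ} (hab : a < b) {f : ℝ → ℝ}
    (hf : ContDiffOn ℝ 1 f (Icc a b)) {t : ℝ} (ht : t ∈ Icc a b) :
    |f b - f t| ≤ ∫ s in a..b, |derivWithin f (Icc a b) s| := by
  have hcont : ContinuousOn (fun s => |derivWithin f (Icc a b) s|) (Icc a b) :=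
    (hf.continuousOn_derivWithin (uniqueDiffOn_Icc hab) le_rfl).abs
  rw [← integral_derivWithin_eq_sub_of_mem_Icc hab hf ht]
  refine (abs_integral_le_integral_abs ht.2).trans ?_
  exact integral_mono_interval ht.1 ht.2 le_rfl (.of_forall fun _ => abs_nonneg _)
    (hcont.intervalIntegrable_of_Icc hab.le)

theorem abs_taylor_remainder_le {a b : ℝ} (hab : a < b) {f : ℝ → ℝ}
    (hf : ContDiffOn ℝ 2 f (Icc a b)) {t : ℝ} (ht : t ∈ Icc a b) :
    |f t - f b - derivWithin f (Icc a b) b * (t - b)|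
      ≤ (b - t) * ∫ s in a..b, |iteratedDerivWithin 2 f (Icc a b) s| := by
  set D := derivWithin f (Icc a b)
  have hD : ContDiffOn ℝ 1 D (Icc a b) := hf.derivWithin (uniqueDiffOn_Icc hab) (by norm_num)
  have hsub : Icc t b ⊆ Icc a b := Icc_subset_Icc ht.1 le_rfl
  have hderiv : ∀ x ∈ Icc t b,
      HasDerivWithinAt (fun s => f s - D b * s) (D x - D b) (Icc t b) x := fun x hx =>
    (((hf.differentiableOn two_ne_zero x (hsub hx)).hasDerivWithinAt.mono hsub).sub
      ((hasDerivWithinAt_id x _).const_mul (D b))).congr_deriv (by rw [mul_one])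
  have hbound : ∀ x ∈ Ico t b, ‖D x - D b‖ ≤ ∫ s in a..b, |derivWithin D (Icc a b) s| :=
    fun x hx => by
      rw [Real.norm_eq_abs, abs_sub_comm]
      exact abs_sub_le_integral_abs_derivWithin hab hD (hsub (Ico_subset_Icc_self hx))
  have hmvt := norm_image_sub_le_of_norm_deriv_le_segment' hderiv hbound b ⟨ht.2, le_rfl⟩
  rw [Real.norm_eq_abs] at hmvt
  rw [iteratedDerivWithin_succ, iteratedDerivWithin_one, abs_sub_comm, mul_comm (b - t)]
  convert hmvt using 2
  ring

theorem abs_rightMeanInterp_sub_le_of_contDiffOn_one {a b : ℝ} (hab : a < b) {v : ℝ → ℝ}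
    (hv : ContDiffOn ℝ 1 v (Icc a b)) {t : ℝ} (ht : t ∈ Icc a b) :
    |rightMeanInterp a b v t - v t|
      ≤ 3 * ∫ s in a..b, |iteratedDerivWithin 1 v (Icc a b) s| := by
  rw [iteratedDerivWithin_one]
  set I := ∫ s in a..b, |derivWithin v (Icc a b) s|
  have hk : 0 < b - a := sub_pos.mpr hab
  have hI : 0 ≤ I := integral_nonneg hab.le fun _ _ => abs_nonneg _
  have h := abs_rightMeanInterp_sub_le hab (hv.continuousOn.intervalIntegrable_of_Icc hab.le)
    intervalIntegrable_const (fun s hs => abs_sub_le_integral_abs_derivWithin hab hv hs) ht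
  have hslope : 2 * (b - t) / (b - a) ^ 2 * ∫ _ in a..b, I ≤ 2 * I := by
    rw [integral_const, smul_eq_mul, div_mul_eq_mul_div, div_le_iff₀ (by positivity)]
    nlinarith [mul_nonneg (mul_nonneg hk.le hI) (sub_nonneg.mpr ht.1)]
  linarith

theorem abs_rightMeanInterp_sub_le_of_contDiffOn_two {a b : ℝ} (hab : a < b) {v : ℝ → ℝ}
    (hv : ContDiffOn ℝ 2 v (Icc a b)) {t : ℝ} (ht : t ∈ Icc a b) :
    |rightMeanInterp a b v t - v t|
      ≤ 2 * (b - a) * ∫ s in a..b, |iteratedDerivWithin 2 v (Icc a b) s| := by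
  set J := ∫ s in a..b, |iteratedDerivWithin 2 v (Icc a b) s|
  set d := derivWithin v (Icc a b) b
  have hk : 0 < b - a := sub_pos.mpr hab
  have hJ : 0 ≤ J := integral_nonneg hab.le fun _ _ => abs_nonneg _
  have hvi : IntervalIntegrable v volume a b := hv.continuousOn.intervalIntegrable_of_Icc hab.le
  have hφ : Continuous fun s => (b - s) * J := by fun_prop
  have hwφ : ∀ s ∈ Icc a b, |(v b - d * (b - b)) - (v s - d * (s - b))| ≤ (b - s) * J :=
    fun s hs => by
      rw [← abs_neg]
      convert abs_taylor_remainder_le hab hv hs using 2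
      ring
  have h := abs_rightMeanInterp_sub_le hab
    (hvi.sub ((continuous_const.mul (continuous_id.sub continuous_const)).intervalIntegrable a b))
    (hφ.intervalIntegrable a b) hwφ ht
  have hφint : ∫ s in a..b, (b - s) * J = (b - a) ^ 2 / 2 * J := by
    rw [integral_mul_const, integral_sub intervalIntegrable_const intervalIntegrable_id,
      integral_const, integral_id, smul_eq_mul]
    ring
  rw [← rightMeanInterp_sub_linear_sub hab.ne hvi d t]
  calc _ ≤ (b - t) * J + 2 * (b - t) / (b - a) ^ 2 * ((b - a) ^ 2 / 2 * J) := hφint ▸ h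
    _ = 2 * (b - t) * J := by field_simp; ring
    _ ≤ 2 * (b - a) * J := by gcongr; linarith [ht.1]

theorem stmt6 (a b : ℝ) (hab : a < b) (r : ℕ) (hr : r = 1 ∨ r = 2)
    (v : ℝ → ℝ) (hv : ContDiffOn ℝ r v (Set.Icc a b)) (S : ℝ)
    (hS : ∀ s ∈ Set.Icc a b, |iteratedDerivWithin r v (Set.Icc a b) s| ≤ S) :
    (∀ t ∈ Set.Icc a b,
        |(v b + ((v b - (b - a)⁻¹ * ∫ s in a..b, v s) / ((b - a) / 2)) * (t - b)) - v t|
          ≤ (4 - (r : ℝ)) * (b - a) ^ (r - 1)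
              * ∫ s in a..b, |iteratedDerivWithin r v (Set.Icc a b) s|)
    ∧ (4 - (r : ℝ)) * (b - a) ^ (r - 1)
          * (∫ s in a..b, |iteratedDerivWithin r v (Set.Icc a b) s|)
        ≤ (4 - (r : ℝ)) * (b - a) ^ r * S := by
  have hk : 0 < b - a := sub_pos.mpr hab
  have hsup : ∫ s in a..b, |iteratedDerivWithin r v (Icc a b) s| ≤ (b - a) * S := by
    have hcont := (hv.continuousOn_iteratedDerivWithin le_rfl (uniqueDiffOn_Icc hab)).abs
    simpa using integral_mono_on hab.le (hcont.intervalIntegrable_of_Icc (μ := volume) hab.le)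
      intervalIntegrable_const hS
  obtain rfl | rfl := hr
  · refine ⟨fun t ht => ?_, by norm_num at hsup ⊢; linarith⟩
    exact (abs_rightMeanInterp_sub_le_of_contDiffOn_one hab hv ht).trans_eq (by norm_num)
  · refine ⟨fun t ht => ?_, by norm_num; nlinarith⟩
    exact (abs_rightMeanInterp_sub_le_of_contDiffOn_two hab hv ht).trans_eq (by norm_num)
end

section
/- Let v : [t_{n-1}, t_n] → ℝ be continuous with continuous derivative, and let Π⁺v be the affine function with Π⁺v(t_{n-1}) = v(t_{n-1}) and ∫_{t_{n-1}}^{t_n}(v - Π⁺v) dt = 0, i.e. Π⁺v(t) = v(t_{n-1}) + ((v̄ - v(t_{n-1}))/(k_n/2))·(t - t_{n-1}) with v̄ the mean value of v. Then sup_{t} |Π⁺v(t)| ≤ 3·sup_t |v(t)| and sup_t |(Π⁺v)'(t)| ≤ (2/k_n)·∫_{t_{n-1}}^{t_n} |v'(t)| dt. -/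
/-!
With `θ = (t - a) / (b - a) ∈ [0, 1]`, the interpolant is `Π⁺v(t) = (1 - 2θ) v(a) + 2θ v̄`,
whose coefficients have absolute values summing to at most `3`, and `|v̄| ≤ sup |v|`.
Its slope is `2 (v̄ - v(a)) / k`, and `v̄ - v(a)` is the mean of `v(s) - v(a) = ∫_a^s v'`,
each of which is bounded by `∫_a^b |v'|`.
-/

open MeasureTheory Set

lemma abs_inv_mul_integral_le_of_abs_le {a b C : ℝ} (hab : a < b) {f : ℝ → ℝ}
    (hf : ∀ s ∈ Ioc a b, |f s| ≤ C) : |(b - a)⁻¹ * ∫ s in a..b, f s| ≤ C := by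
  have hba : 0 < b - a := sub_pos.2 hab
  have h := intervalIntegral.norm_integral_le_of_norm_le_const (a := a) (b := b) (f := f)
    fun s hs => (Real.norm_eq_abs (f s)).trans_le (hf s (by rwa [uIoc_of_le hab.le] at hs))
  rw [Real.norm_eq_abs, abs_of_pos hba] at h
  rw [abs_mul, abs_of_pos (inv_pos.2 hba), inv_mul_le_iff₀ hba]
  linarith

lemma abs_sub_le_integral_abs_deriv {a b s : ℝ} {v v' : ℝ → ℝ}
    (hderiv : ∀ s ∈ Icc a b, HasDerivAt v (v' s) s) (hv' : IntervalIntegrable v' volume a b)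
    (hs : s ∈ Icc a b) : |v s - v a| ≤ ∫ u in a..b, |v' u| := by
  have hsub : uIcc a s ⊆ Icc a b := by
    rw [uIcc_of_le hs.1]
    exact Icc_subset_Icc_right hs.2
  rw [← intervalIntegral.integral_eq_sub_of_hasDerivAt (fun x hx => hderiv x (hsub hx))
    (hv'.mono_set (hsub.trans Icc_subset_uIcc))]
  calc |∫ u in a..s, v' u| ≤ ∫ u in a..s, |v' u| :=
        intervalIntegral.abs_integral_le_integral_abs hs.1
    _ ≤ ∫ u in a..b, |v' u| := intervalIntegral.integral_mono_interval le_rfl hs.1 hs.2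
        (Filter.Eventually.of_forall fun u => abs_nonneg _) hv'.abs

lemma abs_inv_mul_integral_sub_le_integral_abs_deriv {a b : ℝ} (hab : a < b) {v v' : ℝ → ℝ}
    (hderiv : ∀ s ∈ Icc a b, HasDerivAt v (v' s) s) (hv' : IntervalIntegrable v' volume a b) :
    |(b - a)⁻¹ * (∫ s in a..b, v s) - v a| ≤ ∫ u in a..b, |v' u| := by
  have hv : ContinuousOn v (Icc a b) :=
    continuousOn_of_forall_continuousAt fun s hs => (hderiv s hs).continuousAt
  have hmean :
      (b - a)⁻¹ * (∫ s in a..b, v s) - v a = (b - a)⁻¹ * ∫ s in a..b, (v s - v a) := by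
    rw [intervalIntegral.integral_sub (hv.intervalIntegrable_of_Icc hab.le)
      intervalIntegrable_const, intervalIntegral.integral_const, smul_eq_mul]
    field_simp [(sub_pos.2 hab).ne']
  rw [hmean]
  exact abs_inv_mul_integral_le_of_abs_le hab fun s hs =>
    abs_sub_le_integral_abs_deriv hderiv hv' (Ioc_subset_Icc_self hs)

lemma abs_add_div_half_mul_sub_le {a b t x y S : ℝ} (hab : a < b) (ht : t ∈ Icc a b)
    (hx : |x| ≤ S) (hy : |y| ≤ S) : |x + (y - x) / ((b - a) / 2) * (t - a)| ≤ 3 * S := by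
  have hba : 0 < b - a := sub_pos.2 hab
  set θ := (t - a) / (b - a) with hθ
  have hθ0 : 0 ≤ θ := div_nonneg (sub_nonneg.2 ht.1) hba.le
  have hθ1 : θ ≤ 1 := (div_le_one hba).2 (by linarith [ht.2])
  have hcomb : x + (y - x) / ((b - a) / 2) * (t - a) = (1 - 2 * θ) * x + 2 * θ * y := by
    rw [hθ]
    field_simp
    ring
  rw [hcomb]
  calc |(1 - 2 * θ) * x + 2 * θ * y| ≤ |1 - 2 * θ| * |x| + |2 * θ| * |y| := by
        rw [← abs_mul, ← abs_mul]
        exact abs_add_le _ _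
    _ ≤ 1 * S + 2 * S := by
        gcongr
        · exact abs_le.2 ⟨by linarith, by linarith⟩
        · rw [abs_of_nonneg (by linarith)]
          linarith
    _ = 3 * S := by ring

theorem stmt7 (a b : ℝ) (hab : a < b) (v v' : ℝ → ℝ)
    (hderiv : ∀ s ∈ Set.Icc a b, HasDerivAt v (v' s) s)
    (hcont : ContinuousOn v' (Set.Icc a b))
    (S : ℝ) (hS : ∀ s ∈ Set.Icc a b, |v s| ≤ S) :
    (∀ t ∈ Set.Icc a b,
        |v a + ((((b - a)⁻¹ * ∫ s in a..b, v s) - v a) / ((b - a) / 2)) * (t - a)|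
          ≤ 3 * S)
    ∧ |(((b - a)⁻¹ * ∫ s in a..b, v s) - v a) / ((b - a) / 2)|
        ≤ (2 / (b - a)) * ∫ s in a..b, |v' s| := by
  have hhalf : 0 < (b - a) / 2 := half_pos (sub_pos.2 hab)
  have hmean : |(b - a)⁻¹ * ∫ s in a..b, v s| ≤ S :=
    abs_inv_mul_integral_le_of_abs_le hab fun s hs => hS s (Ioc_subset_Icc_self hs)
  refine ⟨fun t ht =>
    abs_add_div_half_mul_sub_le hab ht (hS a (left_mem_Icc.2 hab.le)) hmean, ?_⟩
  have hba : b - a ≠ 0 := (sub_pos.2 hab).ne'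
  rw [abs_div, abs_of_pos hhalf, div_le_iff₀ hhalf]
  calc _ ≤ _ := abs_inv_mul_integral_sub_le_integral_abs_deriv hab hderiv
          (hcont.intervalIntegrable_of_Icc hab.le)
    _ = _ := by field_simp [hba]
end

section
/- Let v : [t_{n-2}, t_n] → ℝ with t_{n-2} < t_{n-1} < t_n, k_{n-1} = t_{n-1} - t_{n-2}, k_n = t_n - t_{n-1}, and suppose k_n ≤ Λ·k_{n-1} for some Λ > 0. Let L v be the quadratic Lagrange interpolant of v at the nodes t_{n-2}, t_{n-1}, t_n. Then for all t ∈ [t_{n-1}, t_n], |L v(t)| ≤ (2 + (5/4)·Λ)·max(|v(t_{n-2})|, |v(t_{n-1})|, |v(t_n)|). -/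
theorem stmt8 (t0 t1 t2 Λ : ℝ) (h01 : t0 < t1) (h12 : t1 < t2) (hΛ : 0 < Λ)
    (hloc : t2 - t1 ≤ Λ * (t1 - t0)) (v : ℝ → ℝ) :
    ∀ t ∈ Set.Icc t1 t2,
      |((t - t1) * (t - t2)) / ((t1 - t0) * ((t1 - t0) + (t2 - t1))) * v t0
        - ((t - t0) * (t - t2)) / ((t1 - t0) * (t2 - t1)) * v t1
        + ((t - t0) * (t - t1)) / (((t1 - t0) + (t2 - t1)) * (t2 - t1)) * v t2|
        ≤ (2 + (5/4) * Λ) * max (|v t0|) (max (|v t1|) (|v t2|)) := by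
  intro t ht
  obtain ⟨ht1, ht2⟩ := ht
  have hk1 : (0:ℝ) < t1 - t0 := by linarith
  have hk2 : (0:ℝ) < t2 - t1 := by linarith
  set M := max (|v t0|) (max (|v t1|) (|v t2|)) with hM
  have hM0 : 0 ≤ M := le_trans (abs_nonneg _) (le_max_left _ _)
  have hv0 : |v t0| ≤ M := le_max_left _ _
  have hv1 : |v t1| ≤ M := le_trans (le_max_left _ _) (le_max_right _ _)
  have hv2 : |v t2| ≤ M := le_trans (le_max_right _ _) (le_max_right _ _)
  have hA : |((t - t1) * (t - t2)) / ((t1 - t0) * ((t1 - t0) + (t2 - t1)))| ≤ Λ/4 := by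
    have hden : (0:ℝ) < (t1 - t0) * ((t1 - t0) + (t2 - t1)) := by positivity
    rw [abs_div, abs_of_pos hden, div_le_iff₀ hden]
    have hnum : |(t - t1) * (t - t2)| = (t - t1) * (t2 - t) := by
      rw [abs_mul, abs_of_nonneg (by linarith), abs_of_nonpos (by linarith)]; ring
    rw [hnum]
    nlinarith [sq_nonneg ((t - t1) - (t2 - t)),
      mul_le_mul_of_nonneg_right hloc hk2.le, mul_pos hk1 hk2,
      mul_pos (mul_pos hΛ hk1) hk1]
  have hB : |((t - t0) * (t - t2)) / ((t1 - t0) * (t2 - t1))| ≤ 1 + Λ := by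
    have hden : (0:ℝ) < (t1 - t0) * (t2 - t1) := by positivity
    rw [abs_div, abs_of_pos hden, div_le_iff₀ hden]
    have hnum : |(t - t0) * (t - t2)| = (t - t0) * (t2 - t) := by
      rw [abs_mul, abs_of_nonneg (by linarith), abs_of_nonpos (by linarith)]; ring
    rw [hnum]
    nlinarith [mul_le_mul_of_nonneg_right hloc hk2.le,
      mul_nonneg (by linarith : (0:ℝ) ≤ t2 - t) (by linarith : (0:ℝ) ≤ t - t1)]
  have hC : |((t - t0) * (t - t1)) / (((t1 - t0) + (t2 - t1)) * (t2 - t1))| ≤ 1 := by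
    have hden : (0:ℝ) < ((t1 - t0) + (t2 - t1)) * (t2 - t1) := by positivity
    rw [abs_div, abs_of_pos hden, div_le_iff₀ hden]
    have hnum : |(t - t0) * (t - t1)| = (t - t0) * (t - t1) := by
      rw [abs_mul, abs_of_nonneg (by linarith), abs_of_nonneg (by linarith)]
    rw [hnum]
    nlinarith [mul_nonneg (by linarith : (0:ℝ) ≤ t2 - t) (by linarith : (0:ℝ) ≤ t - t1)]
  calc |((t - t1) * (t - t2)) / ((t1 - t0) * ((t1 - t0) + (t2 - t1))) * v t0
        - ((t - t0) * (t - t2)) / ((t1 - t0) * (t2 - t1)) * v t1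
        + ((t - t0) * (t - t1)) / (((t1 - t0) + (t2 - t1)) * (t2 - t1)) * v t2|
      ≤ |((t - t1) * (t - t2)) / ((t1 - t0) * ((t1 - t0) + (t2 - t1))) * v t0|
        + |((t - t0) * (t - t2)) / ((t1 - t0) * (t2 - t1)) * v t1|
        + |((t - t0) * (t - t1)) / (((t1 - t0) + (t2 - t1)) * (t2 - t1)) * v t2| := by
        calc _ ≤ |((t - t1) * (t - t2)) / ((t1 - t0) * ((t1 - t0) + (t2 - t1))) * v t0
              - ((t - t0) * (t - t2)) / ((t1 - t0) * (t2 - t1)) * v t1|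
            + |((t - t0) * (t - t1)) / (((t1 - t0) + (t2 - t1)) * (t2 - t1)) * v t2| :=
              abs_add_le _ _
          _ ≤ _ := by
              have := abs_sub (((t - t1) * (t - t2)) / ((t1 - t0) * ((t1 - t0) + (t2 - t1))) * v t0)
                (((t - t0) * (t - t2)) / ((t1 - t0) * (t2 - t1)) * v t1)
              linarith
    _ ≤ (Λ/4) * M + (1 + Λ) * M + 1 * M := by
        rw [abs_mul, abs_mul, abs_mul]
        gcongr <;> first | exact hA | exact hB | exact hC
    _ = (2 + (5/4) * Λ) * M := by ring
end

section
/- Let γ ≥ 1, σ > 0, β := 2 + α_- with -1 < α < 1 and α_- = min(α, 0), and suppose γ > β/σ. For a mesh with k_1 ≤ C·k^γ and k_j ≤ C·k·t_j^{1-1/γ} for j ≥ 2, the sum S = Σ_{j=2}^n k_j^β·∫_{t_{j-1}}^{t_j} t^{σ-3-α_-} dt satisfies S ≤ C'·k^β·t_n^{σ - β/γ} for some constant C' depending only on C, γ, σ, α, provided σ - β/γ > 0. -/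
/-!
The step bound gives `k_j ^ β ≤ C ^ β k ^ β t_j ^ ((1 - 1/γ) β)`, and since `t_j ≤ C s` for
`s ∈ [t_{j-1}, t_j]`, the weight `t_j ^ ((1 - 1/γ) β)` moves inside the `j`-th integral at the cost
of a factor `C ^ β`, turning the integrand `s ^ (σ - 1 - β)` into `s ^ (σ - 1 - β/γ)`. The integrals
then telescope to `∫ s in t_1..t_n, s ^ (σ - 1 - β/γ)`, whose exponent exceeds `-1` because
`σ > β/γ`, so it is at most `t_n ^ (σ - β/γ) / (σ - β/γ)`.
-/

open Finset intervalIntegral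

lemma pos_of_forall_sub_one_lt {t : ℕ → ℝ} {n : ℕ} (h0 : 0 ≤ t 0)
    (hlt : ∀ j, 1 ≤ j → j ≤ n → t (j - 1) < t j) {j : ℕ} (hj : 1 ≤ j) (hjn : j ≤ n) :
    0 < t j := by
  induction j with
  | zero => omega
  | succ i ih =>
    have hstep := hlt (i + 1) (by omega) hjn
    rw [Nat.add_sub_cancel] at hstep
    rcases i.eq_zero_or_pos with rfl | hi
    · linarith
    · linarith [ih hi (by omega)]

lemma sum_Icc_two_integral_adjacent {f : ℝ → ℝ} {t : ℕ → ℝ} {n : ℕ} (hn : 1 ≤ n)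
    (hf : ∀ j ∈ Icc 2 n, IntervalIntegrable f MeasureTheory.volume (t (j - 1)) (t j)) :
    ∑ j ∈ Icc 2 n, ∫ s in t (j - 1)..t j, f s = ∫ s in t 1..t n, f s := by
  rw [← Ico_add_one_right_eq_Icc, ← sum_Ico_add' _ 1 n 1]
  refine sum_integral_adjacent_intervals_Ico hn fun j hj => ?_
  obtain ⟨hj1, hjn⟩ := Set.mem_Ico.mp hj
  simpa using hf (j + 1) (mem_Icc.mpr ⟨by omega, by omega⟩)

lemma integral_rpow_le_of_nonneg {a b p : ℝ} (ha : 0 ≤ a) (hp : -1 < p) :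
    ∫ s in a..b, s ^ p ≤ b ^ (p + 1) / (p + 1) := by
  have hint : ∀ x y : ℝ, IntervalIntegrable (fun s => s ^ p) MeasureTheory.volume x y :=
    fun _ _ => intervalIntegrable_rpow' hp
  have hhead : 0 ≤ ∫ s in (0 : ℝ)..a, s ^ p :=
    integral_nonneg ha fun x hx => Real.rpow_nonneg hx.1 _
  have hwhole : ∫ s in (0 : ℝ)..b, s ^ p = b ^ (p + 1) / (p + 1) := by
    rw [integral_rpow (Or.inl hp), Real.zero_rpow (by linarith), sub_zero]
  linarith [integral_add_adjacent_intervals (hint 0 a) (hint a b)]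

lemma rpow_mul_integral_rpow_le {a b C e q : ℝ} (ha : 0 < a) (hab : a ≤ b) (hbC : b ≤ C * a)
    (he : 0 ≤ e) :
    b ^ e * ∫ s in a..b, s ^ q ≤ C ^ e * ∫ s in a..b, s ^ (q + e) := by
  have hC : 0 ≤ C := nonneg_of_mul_nonneg_left (ha.le.trans (hab.trans hbC)) ha
  have hzero : (0 : ℝ) ∉ Set.uIcc a b := fun h => by
    rw [Set.uIcc_of_le hab] at h; exact ha.not_ge h.1
  rw [← integral_const_mul, ← integral_const_mul]
  refine integral_mono_on hab ((intervalIntegrable_rpow (Or.inr hzero)).const_mul _)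
    ((intervalIntegrable_rpow (Or.inr hzero)).const_mul _) fun s hs => ?_
  have hs0 : 0 < s := ha.trans_le hs.1
  calc b ^ e * s ^ q ≤ (C * s) ^ e * s ^ q := by
        gcongr
        · exact ha.le.trans hab
        · exact hbC.trans (mul_le_mul_of_nonneg_left hs.1 hC)
    _ = C ^ e * s ^ (q + e) := by
        rw [Real.mul_rpow hC hs0.le, Real.rpow_add hs0]; ring

lemma integral_rpow_nonneg {a b q : ℝ} (ha : 0 ≤ a) (hab : a ≤ b) :
    0 ≤ ∫ s in a..b, s ^ q :=
  integral_nonneg hab fun _ hs => Real.rpow_nonneg (ha.trans hs.1) _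

lemma rpow_step_mul_integral_rpow_le {a b k C γ β q : ℝ} (ha : 0 < a) (hab : a ≤ b)
    (hbC : b ≤ C * a) (hC : 1 ≤ C) (hγ : 1 ≤ γ) (hβ : 0 ≤ β) (hk : 0 ≤ k)
    (hstep : b - a ≤ C * k * b ^ (1 - 1 / γ)) :
    (b - a) ^ β * ∫ s in a..b, s ^ q
      ≤ C ^ β * C ^ β * k ^ β * ∫ s in a..b, s ^ (q + (1 - 1 / γ) * β) := by
  have hC0 : 0 ≤ C := by linarith
  have hb : 0 ≤ b := ha.le.trans hab
  have hγ' : 0 ≤ 1 - 1 / γ := by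
    rw [sub_nonneg, div_le_one (by linarith)]; exact hγ
  have he : 0 ≤ (1 - 1 / γ) * β := mul_nonneg hγ' hβ
  have heβ : (1 - 1 / γ) * β ≤ β :=
    mul_le_of_le_one_left hβ (sub_le_self _ (by positivity))
  have hpow : (b - a) ^ β ≤ C ^ β * k ^ β * b ^ ((1 - 1 / γ) * β) := by
    calc (b - a) ^ β ≤ (C * k * b ^ (1 - 1 / γ)) ^ β :=
          Real.rpow_le_rpow (sub_nonneg.mpr hab) hstep hβ
      _ = C ^ β * k ^ β * b ^ ((1 - 1 / γ) * β) := by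
          rw [Real.mul_rpow (mul_nonneg hC0 hk) (Real.rpow_nonneg hb _), Real.mul_rpow hC0 hk,
            ← Real.rpow_mul hb]
  have hI := integral_rpow_nonneg (q := q) ha.le hab
  have hJ := integral_rpow_nonneg (q := q + (1 - 1 / γ) * β) ha.le hab
  calc (b - a) ^ β * ∫ s in a..b, s ^ q
      ≤ C ^ β * k ^ β * (b ^ ((1 - 1 / γ) * β) * ∫ s in a..b, s ^ q) := by
        rw [← mul_assoc]; exact mul_le_mul_of_nonneg_right hpow hI
    _ ≤ C ^ β * k ^ β * (C ^ ((1 - 1 / γ) * β) * ∫ s in a..b, s ^ (q + (1 - 1 / γ) * β)) := by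
        gcongr ?_ * ?_
        exact rpow_mul_integral_rpow_le ha hab hbC he
    _ ≤ C ^ β * k ^ β * (C ^ β * ∫ s in a..b, s ^ (q + (1 - 1 / γ) * β)) := by
        gcongr
    _ = C ^ β * C ^ β * k ^ β * ∫ s in a..b, s ^ (q + (1 - 1 / γ) * β) := by ring

theorem sum_rpow_step_mul_integral_le {t : ℕ → ℝ} {n : ℕ} {k C γ β σ : ℝ} (hn : 1 ≤ n)
    (hk : 0 ≤ k) (hC : 1 ≤ C) (hγ : 1 ≤ γ) (hβ : 0 ≤ β) (hσβ : 0 < σ - β / γ)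
    (ht0 : 0 ≤ t 0) (hlt : ∀ j, 1 ≤ j → j ≤ n → t (j - 1) < t j)
    (hstep : ∀ j, 2 ≤ j → j ≤ n → t j - t (j - 1) ≤ C * k * t j ^ (1 - 1 / γ))
    (hquasi : ∀ j, 2 ≤ j → j ≤ n → t j ≤ C * t (j - 1)) :
    ∑ j ∈ Icc 2 n, (t j - t (j - 1)) ^ β * ∫ s in t (j - 1)..t j, s ^ (σ - 1 - β)
      ≤ C ^ β * C ^ β / (σ - β / γ) * k ^ β * t n ^ (σ - β / γ) := by
  have hpos := fun j => pos_of_forall_sub_one_lt ht0 hlt (j := j)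
  have hp : -1 < σ - 1 - β / γ := by linarith
  calc ∑ j ∈ Icc 2 n, (t j - t (j - 1)) ^ β * ∫ s in t (j - 1)..t j, s ^ (σ - 1 - β)
      ≤ ∑ j ∈ Icc 2 n, C ^ β * C ^ β * k ^ β * ∫ s in t (j - 1)..t j, s ^ (σ - 1 - β / γ) := by
        refine sum_le_sum fun j hj => ?_
        obtain ⟨hj2, hjn⟩ := mem_Icc.mp hj
        have h := rpow_step_mul_integral_rpow_le (q := σ - 1 - β)
          (hpos (j - 1) (by omega) (by omega)) (hlt j (by omega) hjn).le
          (hquasi j hj2 hjn) hC hγ hβ hk (hstep j hj2 hjn)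
        rwa [show σ - 1 - β + (1 - 1 / γ) * β = σ - 1 - β / γ by ring] at h
    _ = C ^ β * C ^ β * k ^ β * ∫ s in t 1..t n, s ^ (σ - 1 - β / γ) := by
        rw [← mul_sum, sum_Icc_two_integral_adjacent hn fun _ _ => intervalIntegrable_rpow' hp]
    _ ≤ C ^ β * C ^ β * k ^ β * (t n ^ (σ - 1 - β / γ + 1) / (σ - 1 - β / γ + 1)) := by
        gcongr; exact integral_rpow_le_of_nonneg (hpos 1 le_rfl hn).le hp
    _ = C ^ β * C ^ β / (σ - β / γ) * k ^ β * t n ^ (σ - β / γ) := by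
        rw [show σ - 1 - β / γ + 1 = σ - β / γ by ring]; ring

theorem stmt13_general (γ σ α C : ℝ) (hγ : 1 ≤ γ) (hσ : 0 < σ) (hα : -1 < α)
    (hC : 1 ≤ C) (hγβ : γ > (2 + min α 0) / σ) :
    ∃ C' > 0, ∀ (n : ℕ) (t : ℕ → ℝ) (k : ℝ), 0 < k → 2 ≤ n →
      t 0 = 0 → (∀ j : ℕ, 1 ≤ j → j ≤ n → t (j - 1) < t j) →
      (∀ j : ℕ, 1 ≤ j → j ≤ n → t j - t (j - 1) ≤ k) →
      t 1 ≤ C * k ^ γ →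
      (∀ j : ℕ, 2 ≤ j → j ≤ n → t j - t (j - 1) ≤ C * k * (t j) ^ (1 - 1/γ)) →
      (∀ j : ℕ, 2 ≤ j → j ≤ n → t j ≤ C * t (j - 1)) →
      ∑ j ∈ Finset.Icc 2 n,
          (t j - t (j - 1)) ^ (2 + min α 0)
            * ∫ s in (t (j - 1))..(t j), s ^ (σ - 3 - min α 0)
        ≤ C' * k ^ (2 + min α 0) * (t n) ^ (σ - (2 + min α 0) / γ) := by
  have hβ : 0 ≤ 2 + min α 0 := by linarith [lt_min hα neg_one_lt_zero]
  have hσβ : 0 < σ - (2 + min α 0) / γ := by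
    have := (div_lt_iff₀ hσ).mp hγβ
    rw [sub_pos, div_lt_iff₀ (by linarith)]
    linarith
  refine ⟨C ^ (2 + min α 0) * C ^ (2 + min α 0) / (σ - (2 + min α 0) / γ), by positivity,
    fun n t k hk hn ht0 hlt _ _ hstep hquasi => ?_⟩
  rw [show σ - 3 - min α 0 = σ - 1 - (2 + min α 0) by ring]
  exact sum_rpow_step_mul_integral_le (by omega) hk.le hC hγ hβ hσβ ht0.ge hlt hstep hquasi

theorem stmt13 (γ σ α C : ℝ) (hγ : 1 ≤ γ) (hσ : 0 < σ) (hα : -1 < α) (hα' : α < 1)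
    (hC : 1 ≤ C) (hγβ : γ > (2 + min α 0) / σ) :
    ∃ C' > 0, ∀ (n : ℕ) (t : ℕ → ℝ) (k : ℝ), 0 < k → 2 ≤ n →
      t 0 = 0 → (∀ j : ℕ, 1 ≤ j → j ≤ n → t (j - 1) < t j) →
      (∀ j : ℕ, 1 ≤ j → j ≤ n → t j - t (j - 1) ≤ k) →
      t 1 ≤ C * k ^ γ →
      (∀ j : ℕ, 2 ≤ j → j ≤ n → t j - t (j - 1) ≤ C * k * (t j) ^ (1 - 1/γ)) →
      (∀ j : ℕ, 2 ≤ j → j ≤ n → t j ≤ C * t (j - 1)) →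
      ∑ j ∈ Finset.Icc 2 n,
          (t j - t (j - 1)) ^ (2 + min α 0)
            * ∫ s in (t (j - 1))..(t j), s ^ (σ - 3 - min α 0)
        ≤ C' * k ^ (2 + min α 0) * (t n) ^ (σ - (2 + min α 0) / γ) :=
  stmt13_general γ σ α C hγ hσ hα hC hγβ
end
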